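/- arXiv:1812.03457 — 4 statements merged into one kernel-verified Lean document; each statement's English description precedes it below -/
import Mathlib

section
/- If the set X* of global minimizers of f on Ω has positive Lebesgue measure μ(X*) > 0, then for every x ∈ X*, m^(k)(x) → 1/μ(X*) as k → ∞, and for every x ∉ X*, m^(k)(x) → 0 as k → ∞. -/
/-!
Normalize by the maximum `M` of `τ` on `Ω`, attained exactly on `X*`: then
`m^(k)(x) = (τ x / M)^k / ∫_Ω (τ / M)^k`. The integrand is bounded by `1`, equals `1` on `X*` and
tends to `0` off `X*`, so by dominated convergence the denominator tends to `μ(X*) > 0`, while the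
numerator is `1` on `X*` and tends to `0` off it.
-/

open MeasureTheory Real Filter Topology

section PeakSet

variable {α : Type*} [MeasurableSpace α] {μ : Measure α} {s t : Set α}

theorem tendsto_setIntegral_rpow_atTop_measureReal {g : α → ℝ} (hs : MeasurableSet s)
    (ht : MeasurableSet t) (hts : t ⊆ s) (hμs : μ s ≠ ⊤) (hg : AEMeasurable g (μ.restrict s))
    (hg0 : ∀ x ∈ s, 0 ≤ g x) (hg1 : ∀ x ∈ t, g x = 1) (hlt : ∀ x ∈ s \ t, g x < 1) :
    Tendsto (fun k : ℝ => ∫ x in s, g x ^ k ∂μ) atTop (𝓝 (μ.real t)) := by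
  have hlim : ∫ x in s, t.indicator (fun _ => (1 : ℝ)) x ∂μ = μ.real t := by
    rw [setIntegral_indicator ht, Set.inter_eq_right.mpr hts, setIntegral_const, smul_eq_mul,
      mul_one]
  rw [← hlim]
  refine tendsto_integral_filter_of_dominated_convergence (fun _ => 1)
    (Eventually.of_forall fun k => (hg.pow_const k).aestronglyMeasurable) ?_
    (integrableOn_const hμs) ?_
  · filter_upwards [eventually_ge_atTop 0] with k hk
    filter_upwards [ae_restrict_mem hs] with x hx
    have hgx : g x ≤ 1 := by
      by_cases hxt : x ∈ t
      · exact (hg1 x hxt).le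
      · exact (hlt x ⟨hx, hxt⟩).le
    rw [norm_of_nonneg (rpow_nonneg (hg0 x hx) k)]
    exact rpow_le_one (hg0 x hx) hgx hk
  · filter_upwards [ae_restrict_mem hs] with x hx
    by_cases hxt : x ∈ t
    · simp only [Set.indicator_of_mem hxt, hg1 x hxt, one_rpow, tendsto_const_nhds]
    · rw [Set.indicator_of_notMem hxt]
      exact tendsto_rpow_atTop_of_base_lt_one _ (by linarith [hg0 x hx]) (hlt x ⟨hx, hxt⟩)

theorem rpow_div_setIntegral_rpow_eq_div_rpow {h : α → ℝ} {M : ℝ} (hs : MeasurableSet s)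
    (hM : 0 < M) (hh0 : ∀ x ∈ s, 0 ≤ h x) {x : α} (hx : x ∈ s) (k : ℝ) :
    h x ^ k / ∫ y in s, h y ^ k ∂μ = (h x / M) ^ k / ∫ y in s, (h y / M) ^ k ∂μ := by
  have hint : ∫ y in s, (h y / M) ^ k ∂μ = (∫ y in s, h y ^ k ∂μ) / M ^ k := by
    rw [← integral_div]
    exact setIntegral_congr_fun hs fun y hy => div_rpow (hh0 y hy) hM.le k
  have hMk : M ^ k ≠ 0 := (rpow_pos_of_pos hM k).ne'
  rw [hint, div_rpow (hh0 x hx) hM.le, div_div_div_cancel_right₀ hMk]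

theorem tendsto_rpow_div_setIntegral_rpow {h : α → ℝ} {M : ℝ} (hs : MeasurableSet s)
    (ht : MeasurableSet t) (hts : t ⊆ s) (hμs : μ s ≠ ⊤) (hμt : μ t ≠ 0)
    (hh : AEMeasurable h (μ.restrict s)) (hM : 0 < M) (hh0 : ∀ x ∈ s, 0 ≤ h x)
    (hhM : ∀ x ∈ t, h x = M) (hlt : ∀ x ∈ s \ t, h x < M) :
    (∀ x ∈ t, Tendsto (fun k : ℝ => h x ^ k / ∫ y in s, h y ^ k ∂μ) atTop (𝓝 (1 / μ.real t))) ∧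
    (∀ x ∈ s \ t, Tendsto (fun k : ℝ => h x ^ k / ∫ y in s, h y ^ k ∂μ) atTop (𝓝 0)) := by
  have hden : Tendsto (fun k : ℝ => ∫ y in s, (h y / M) ^ k ∂μ) atTop (𝓝 (μ.real t)) :=
    tendsto_setIntegral_rpow_atTop_measureReal hs ht hts hμs (hh.div_const M)
      (fun x hx => div_nonneg (hh0 x hx) hM.le) (fun x hx => by simp [hhM x hx, hM.ne'])
      (fun x hx => (div_lt_one hM).mpr (hlt x hx))
  have hμt' : μ.real t ≠ 0 :=
    ENNReal.toReal_ne_zero.mpr ⟨hμt, ne_top_of_le_ne_top hμs (measure_mono hts)⟩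
  have hratio {x} (hx : x ∈ s) :=
    funext (rpow_div_setIntegral_rpow_eq_div_rpow (μ := μ) hs hM hh0 hx)
  refine ⟨fun x hx => ?_, fun x hx => ?_⟩
  · rw [hratio (hts hx)]
    have hone : (fun k : ℝ => (h x / M) ^ k) = fun _ => 1 := by
      simp [hhM x hx, hM.ne']
    exact (hone ▸ tendsto_const_nhds).div hden hμt'
  · rw [hratio hx.1, ← zero_div (μ.real t)]
    exact (tendsto_rpow_atTop_of_base_lt_one _
      (by linarith [div_nonneg (hh0 x hx.1) hM.le]) ((div_lt_one hM).mpr (hlt x hx))).div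
        hden hμt'

end PeakSet

theorem stmt4_general {n : ℕ} (Ω : Set (EuclideanSpace ℝ (Fin n)))
    (hΩc : IsCompact Ω)
    (f : EuclideanSpace ℝ (Fin n) → ℝ) (hf : ContinuousOn f Ω)
    (ρ : ℝ → ℝ) (hρ : StrictAnti ρ) (hρpos : ∀ x ∈ Ω, 0 < ρ (f x))
    (τ : EuclideanSpace ℝ (Fin n) → ℝ) (hτ : ∀ x, τ x = ρ (f x))
    (m : ℝ → EuclideanSpace ℝ (Fin n) → ℝ)
    (hm : ∀ k x, m k x = τ x ^ k / ∫ t in Ω, τ t ^ k)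
    (Xstar : Set (EuclideanSpace ℝ (Fin n)))
    (hX : Xstar = {x ∈ Ω | ∀ y ∈ Ω, f x ≤ f y})
    (hXpos : 0 < volume Xstar) :
    (∀ x ∈ Xstar,
      Tendsto (fun k : ℝ => m k x) atTop (nhds (1 / (volume Xstar).toReal))) ∧
    (∀ x ∈ Ω \ Xstar, Tendsto (fun k : ℝ => m k x) atTop (nhds 0)) := by
  obtain ⟨x₀, hx₀Ω, hx₀⟩ : {x ∈ Ω | ∀ y ∈ Ω, f x ≤ f y}.Nonempty :=
    hX ▸ nonempty_of_measure_ne_zero hXpos.ne'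
  have hXeq : Xstar = Ω ∩ f ⁻¹' Set.Iic (f x₀) := by
    rw [hX]
    ext x
    exact ⟨fun hx => ⟨hx.1, hx.2 x₀ hx₀Ω⟩, fun hx => ⟨hx.1, fun y hy => hx.2.trans (hx₀ y hy)⟩⟩
  have hXΩ : Xstar ⊆ Ω := hXeq ▸ Set.inter_subset_left
  have hτ_meas : AEMeasurable τ (volume.restrict Ω) := by
    rw [funext hτ]
    exact hρ.antitone.measurable.comp_aemeasurable (hf.aemeasurable hΩc.measurableSet)
  have hτ_peak : ∀ x ∈ Xstar, τ x = ρ (f x₀) := fun x hx => by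
    rw [hτ, le_antisymm (hXeq ▸ hx).2 (hx₀ x (hXΩ hx))]
  have hτ_lt : ∀ x ∈ Ω \ Xstar, τ x < ρ (f x₀) := fun x hx => by
    rw [hτ]
    refine hρ ((hx₀ x hx.1).lt_of_ne fun hfx => hx.2 ?_)
    exact hXeq ▸ ⟨hx.1, (hfx ▸ le_rfl : f x ≤ f x₀)⟩
  simp only [hm]
  exact tendsto_rpow_div_setIntegral_rpow hΩc.measurableSet
    (hXeq ▸ hf.preimage_isClosed_of_isClosed hΩc.isClosed isClosed_Iic).measurableSet hXΩ
    hΩc.measure_lt_top.ne hXpos.ne' hτ_meas (hρpos x₀ hx₀Ω)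
    (fun x hx => hτ x ▸ (hρpos x hx).le) hτ_peak hτ_lt

/-- If μ(X*) > 0, then m^(k)(x) → 1/μ(X*) for x ∈ X*
and m^(k)(x) → 0 for x ∉ X* as k → ∞. -/
theorem stmt4 {n : ℕ} (Ω : Set (EuclideanSpace ℝ (Fin n)))
    (hΩc : IsCompact Ω) (hΩpos : 0 < volume Ω)
    (f : EuclideanSpace ℝ (Fin n) → ℝ) (hf : ContinuousOn f Ω)
    (ρ : ℝ → ℝ) (hρ : StrictAnti ρ) (hρpos : ∀ x ∈ Ω, 0 < ρ (f x))
    (τ : EuclideanSpace ℝ (Fin n) → ℝ) (hτ : ∀ x, τ x = ρ (f x))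
    (m : ℝ → EuclideanSpace ℝ (Fin n) → ℝ)
    (hm : ∀ k x, m k x = τ x ^ k / ∫ t in Ω, τ t ^ k)
    (Xstar : Set (EuclideanSpace ℝ (Fin n)))
    (hX : Xstar = {x ∈ Ω | ∀ y ∈ Ω, f x ≤ f y})
    (hXpos : 0 < volume Xstar) :
    (∀ x ∈ Xstar,
      Tendsto (fun k : ℝ => m k x) atTop (nhds (1 / (volume Xstar).toReal))) ∧
    (∀ x ∈ Ω \ Xstar, Tendsto (fun k : ℝ => m k x) atTop (nhds 0)) :=
  stmt4_general Ω hΩc f hf ρ hρ hρpos τ hτ m hm Xstar hX hXpos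
end

section
/- The map k ↦ ∫_Ω f(x) m^(k)(x) dx is non-increasing in k; its derivative equals E^(k)(f·log τ) − E^(k)(f)·E^(k)(log τ) ≤ 0. -/
open MeasureTheory Real

/-- k ↦ ∫_Ω f m^(k) is non-increasing; its derivative equals
E^(k)(f·log τ) − E^(k)(f)·E^(k)(log τ) ≤ 0. -/
theorem stmt9 {n : ℕ} (Ω : Set (EuclideanSpace ℝ (Fin n)))
    (hΩc : IsCompact Ω) (hΩpos : 0 < volume Ω)
    (f : EuclideanSpace ℝ (Fin n) → ℝ) (hf : ContinuousOn f Ω)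
    (ρ : ℝ → ℝ) (hρ : StrictAnti ρ) (hρpos : ∀ x ∈ Ω, 0 < ρ (f x))
    (τ : EuclideanSpace ℝ (Fin n) → ℝ) (hτ : ∀ x, τ x = ρ (f x))
    (m : ℝ → EuclideanSpace ℝ (Fin n) → ℝ)
    (hm : ∀ k x, m k x = τ x ^ k / ∫ t in Ω, τ t ^ k)
    (E : ℝ → (EuclideanSpace ℝ (Fin n) → ℝ) → ℝ)
    (hE : ∀ k h, E k h = ∫ x in Ω, h x * m k x) :
    Antitone (fun k : ℝ => E k f) ∧
    ∀ k : ℝ, HasDerivAt (fun κ : ℝ => E κ f)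
        (E k (fun x => f x * Real.log (τ x)) -
          E k f * E k (fun x => Real.log (τ x))) k ∧
      E k (fun x => f x * Real.log (τ x)) -
        E k f * E k (fun x => Real.log (τ x)) ≤ 0 := by
  have hΩm : MeasurableSet Ω := hΩc.isClosed.measurableSet
  have hvol : volume Ω ≠ ⊤ := hΩc.measure_lt_top.ne
  have hΩne : Ω.Nonempty := by
    by_contra h
    rw [Set.not_nonempty_iff_eq_empty] at h
    simp [h] at hΩpos
  obtain ⟨xm, hxm, hxmin⟩ := hΩc.exists_isMinOn hΩne hf
  obtain ⟨xM, hxM, hxmax⟩ := hΩc.exists_isMaxOn hΩne hf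
  set a := ρ (f xM) with ha_def
  set b := ρ (f xm) with hb_def
  have ha : 0 < a := hρpos _ hxM
  have hτpos : ∀ x ∈ Ω, 0 < τ x := fun x hx => (hτ x) ▸ hρpos x hx
  have hτa : ∀ x ∈ Ω, a ≤ τ x := fun x hx => by
    rw [hτ]; exact hρ.antitone (hxmax hx)
  have hτb : ∀ x ∈ Ω, τ x ≤ b := fun x hx => by
    rw [hτ]; exact hρ.antitone (hxmin hx)
  -- bound on |f|
  set F : ℝ := max |f xm| |f xM| with hF_def
  have hfF : ∀ x ∈ Ω, |f x| ≤ F := by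
    intro x hx
    rw [abs_le]
    constructor
    · have := hxmin hx
      calc -F ≤ -|f xm| := by simp [hF_def]
        _ ≤ f xm := neg_abs_le _
        _ ≤ f x := hxmin hx
    · calc f x ≤ f xM := hxmax hx
        _ ≤ |f xM| := le_abs_self _
        _ ≤ F := le_max_right _ _
  -- bound on |log τ|
  set G : ℝ := max |Real.log a| |Real.log b| with hG_def
  have hG0 : 0 ≤ G := le_trans (abs_nonneg _) (le_max_left _ _)
  have hlogG : ∀ x ∈ Ω, |Real.log (τ x)| ≤ G := by
    intro x hx
    rw [abs_le]
    constructor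
    · calc -G ≤ -|Real.log a| := by simp [hG_def]
        _ ≤ Real.log a := neg_abs_le _
        _ ≤ Real.log (τ x) := Real.log_le_log ha (hτa x hx)
    · calc Real.log (τ x) ≤ Real.log b := Real.log_le_log (hτpos x hx) (hτb x hx)
        _ ≤ |Real.log b| := le_abs_self _
        _ ≤ G := le_max_right _ _
  -- uniform bounds on τ^κ for κ near k
  have hrpow_le : ∀ k : ℝ, ∀ x ∈ Ω, ∀ κ : ℝ, |κ| ≤ |k| + 1 →
      τ x ^ κ ≤ Real.exp (G * (|k| + 1)) := by
    intro k x hx κ hκ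
    rw [Real.rpow_def_of_pos (hτpos x hx)]
    apply Real.exp_le_exp.2
    calc Real.log (τ x) * κ ≤ |Real.log (τ x) * κ| := le_abs_self _
      _ = |Real.log (τ x)| * |κ| := abs_mul _ _
      _ ≤ G * (|k| + 1) := by
          apply mul_le_mul (hlogG x hx) hκ (abs_nonneg _) hG0
  have hrpow_ge : ∀ k : ℝ, ∀ x ∈ Ω,
      Real.exp (-(G * (|k| + 1))) ≤ τ x ^ k := by
    intro k x hx
    rw [Real.rpow_def_of_pos (hτpos x hx)]
    apply Real.exp_le_exp.2
    have : |Real.log (τ x) * k| ≤ G * (|k| + 1) := by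
      rw [abs_mul]
      apply mul_le_mul (hlogG x hx) (by linarith [abs_nonneg k]) (abs_nonneg _) hG0
    linarith [(abs_le.1 this).1]
  have hrpow_nonneg : ∀ k : ℝ, ∀ x ∈ Ω, 0 ≤ τ x ^ k := fun k x hx =>
    Real.rpow_nonneg (hτpos x hx).le k
  -- measurability
  have hμfin : volume.restrict Ω Set.univ < ⊤ := by
    rw [Measure.restrict_apply_univ]; exact hΩc.measure_lt_top
  haveI : IsFiniteMeasure (volume.restrict Ω) := ⟨hμfin⟩
  have hfm : AEMeasurable f (volume.restrict Ω) := hf.aemeasurable hΩm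
  have hτm : AEMeasurable τ (volume.restrict Ω) := by
    have hρmeas : Measurable ρ := hρ.antitone.measurable
    have : AEMeasurable (fun x => ρ (f x)) (volume.restrict Ω) :=
      hρmeas.comp_aemeasurable hfm
    exact this.congr (ae_of_all _ fun x => (hτ x).symm)
  have hlogm : AEMeasurable (fun x => Real.log (τ x)) (volume.restrict Ω) :=
    Real.measurable_log.comp_aemeasurable hτm
  have hwm : ∀ k : ℝ, AEMeasurable (fun x => τ x ^ k) (volume.restrict Ω) := by
    intro k
    have h1 : AEMeasurable (fun x => Real.exp (Real.log (τ x) * k))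
        (volume.restrict Ω) :=
      Real.measurable_exp.comp_aemeasurable (hlogm.mul aemeasurable_const)
    refine h1.congr ?_
    rw [Filter.EventuallyEq, ae_restrict_iff' hΩm]
    exact ae_of_all _ fun x hx => (Real.rpow_def_of_pos (hτpos x hx) k).symm
  -- integrability of bounded a.e.-measurable functions on Ω
  have hInt : ∀ (g : EuclideanSpace ℝ (Fin n) → ℝ) (C : ℝ),
      AEMeasurable g (volume.restrict Ω) → (∀ x ∈ Ω, |g x| ≤ C) →
      Integrable g (volume.restrict Ω) := by
    intro g C hgm hgC
    refine Integrable.mono' (integrable_const C) hgm.aestronglyMeasurable ?_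
    rw [ae_restrict_iff' hΩm]
    exact ae_of_all _ fun x hx => by simpa using hgC x hx
  -- integrability of the four basic integrands
  have hint_w : ∀ k : ℝ, Integrable (fun x => τ x ^ k) (volume.restrict Ω) := by
    intro k
    refine hInt _ (Real.exp (G * (|k| + 1))) (hwm k) fun x hx => ?_
    rw [abs_of_nonneg (hrpow_nonneg k x hx)]
    exact hrpow_le k x hx k (by linarith [abs_nonneg k])
  have hint_gw : ∀ (g : EuclideanSpace ℝ (Fin n) → ℝ) (C : ℝ),
      AEMeasurable g (volume.restrict Ω) → (∀ x ∈ Ω, |g x| ≤ C) → ∀ k : ℝ,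
      Integrable (fun x => g x * τ x ^ k) (volume.restrict Ω) := by
    intro g C hgm hgC k
    refine hInt _ (C * Real.exp (G * (|k| + 1))) ((hgm.mul (hwm k))) fun x hx => ?_
    rw [abs_mul, abs_of_nonneg (hrpow_nonneg k x hx)]
    have h1 := hgC x hx
    have h2 := hrpow_le k x hx k (by linarith [abs_nonneg k])
    have h3 := hrpow_nonneg k x hx
    have h4 : (0:ℝ) ≤ C := le_trans (abs_nonneg _) h1
    nlinarith
  -- positivity of the normalizing integral
  have hIpos : ∀ k : ℝ, (0:ℝ) < ∫ x in Ω, τ x ^ k := by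
    intro k
    have h1 : Real.exp (-(G * (|k| + 1))) * (volume Ω).toReal ≤ ∫ x in Ω, τ x ^ k :=
      setIntegral_ge_of_const_le_real hΩm hvol (fun x hx => hrpow_ge k x hx) (hint_w k)
    have h2 : (0:ℝ) < (volume Ω).toReal := ENNReal.toReal_pos hΩpos.ne' hvol
    have h3 : (0:ℝ) < Real.exp (-(G * (|k| + 1))) := Real.exp_pos _
    nlinarith
  -- rewrite E in terms of ratios of integrals
  have hEeq : ∀ (k : ℝ) (h : EuclideanSpace ℝ (Fin n) → ℝ),
      E k h = (∫ x in Ω, h x * τ x ^ k) / (∫ x in Ω, τ x ^ k) := by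
    intro k h
    rw [hE]
    have : ∀ x, h x * m k x = (h x * τ x ^ k) / (∫ t in Ω, τ t ^ k) := by
      intro x; rw [hm]; ring
    simp only [this]
    rw [integral_div]
  -- the key differentiation lemma
  have key : ∀ (g : EuclideanSpace ℝ (Fin n) → ℝ) (C : ℝ),
      AEMeasurable g (volume.restrict Ω) → (∀ x ∈ Ω, |g x| ≤ C) → ∀ k : ℝ,
      HasDerivAt (fun κ : ℝ => ∫ x in Ω, g x * τ x ^ κ)
        (∫ x in Ω, g x * Real.log (τ x) * τ x ^ k) k := by
    intro g C hgm hgC k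
    have main := hasDerivAt_integral_of_dominated_loc_of_deriv_le
      (F := fun κ : ℝ => fun x => g x * τ x ^ κ)
      (F' := fun κ : ℝ => fun x => g x * (τ x ^ κ * Real.log (τ x)))
      (x₀ := k) (s := Metric.ball k 1)
      (bound := fun _ => C * (Real.exp (G * (|k| + 1)) * G))
      (Metric.ball_mem_nhds k one_pos)
      (Filter.Eventually.of_forall fun κ =>
        ((hgm.mul (hwm κ))).aestronglyMeasurable)
      (hint_gw g C hgm hgC k)
      ((hgm.mul ((hwm k).mul hlogm)).aestronglyMeasurable)
      ?_ (integrable_const _) ?_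
    · have h2 : (∫ x in Ω, g x * (τ x ^ k * Real.log (τ x)))
          = ∫ x in Ω, g x * Real.log (τ x) * τ x ^ k := by
        apply integral_congr_ae
        exact ae_of_all _ fun x => by ring
      rw [h2] at main
      exact main.2
    · rw [ae_restrict_iff' hΩm]
      refine ae_of_all _ fun x hx κ hκ => ?_
      have hκ' : |κ| ≤ |k| + 1 := by
        have := abs_sub_abs_le_abs_sub κ k
        have h2 : |κ - k| < 1 := by
          simpa [Real.dist_eq] using hκ
        linarith
      have h1 := hgC x hx
      have h2 := hrpow_le k x hx κ hκ'
      have h3 := hrpow_nonneg κ x hx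
      have h4 := hlogG x hx
      have h5 : (0:ℝ) ≤ C := le_trans (abs_nonneg _) h1
      have habs : ‖g x * (τ x ^ κ * Real.log (τ x))‖
          = |g x| * (τ x ^ κ * |Real.log (τ x)|) := by
        rw [Real.norm_eq_abs, abs_mul, abs_mul, abs_of_nonneg h3]
      rw [habs]
      show _ ≤ C * (Real.exp (G * (|k| + 1)) * G)
      exact mul_le_mul h1 (mul_le_mul h2 h4 (abs_nonneg _) (Real.exp_pos _).le)
        (mul_nonneg h3 (abs_nonneg _)) h5
    · rw [ae_restrict_iff' hΩm]
      refine ae_of_all _ fun x hx κ _ => ?_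
      exact ((hasStrictDerivAt_const_rpow (hτpos x hx) κ).hasDerivAt).const_mul (g x)
  -- notation for the four integrals at k
  set I : ℝ → ℝ := fun k => ∫ x in Ω, τ x ^ k with hI_def
  set J : ℝ → ℝ := fun k => ∫ x in Ω, f x * τ x ^ k with hJ_def
  set K : ℝ → ℝ := fun k => ∫ x in Ω, f x * Real.log (τ x) * τ x ^ k with hK_def
  set L : ℝ → ℝ := fun k => ∫ x in Ω, Real.log (τ x) * τ x ^ k with hL_def
  have hdJ : ∀ k, HasDerivAt J (K k) k := key f F hfm hfF
  have hdI : ∀ k, HasDerivAt I (L k) k := by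
    intro k
    have h1 := key (fun _ => (1:ℝ)) 1 aemeasurable_const (fun x _ => by simp) k
    simp only [one_mul] at h1
    exact h1
  -- E κ f = J κ / I κ as functions
  have hEf : (fun κ : ℝ => E κ f) = fun κ => J κ / I κ := by
    funext κ; exact hEeq κ f
  -- the covariance inequality : K k * I k - J k * L k ≤ 0
  have hcov : ∀ k : ℝ, K k * I k - J k * L k ≤ 0 := by
    intro k
    set u : EuclideanSpace ℝ (Fin n) → ℝ := fun x => f x * Real.log (τ x) * τ x ^ k
    set v : EuclideanSpace ℝ (Fin n) → ℝ := fun x => f x * τ x ^ k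
    set w : EuclideanSpace ℝ (Fin n) → ℝ := fun x => τ x ^ k
    set z : EuclideanSpace ℝ (Fin n) → ℝ := fun x => Real.log (τ x) * τ x ^ k
    have hintu : Integrable u (volume.restrict Ω) :=
      hint_gw (fun x => f x * Real.log (τ x)) (F * G) (hfm.mul hlogm)
        (fun x hx => by
          rw [abs_mul]
          exact mul_le_mul (hfF x hx) (hlogG x hx) (abs_nonneg _)
            (le_trans (abs_nonneg _) (hfF x hx))) k
    have hintv : Integrable v (volume.restrict Ω) := hint_gw f F hfm hfF k
    have hintw : Integrable w (volume.restrict Ω) := hint_w k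
    have hintz : Integrable z (volume.restrict Ω) :=
      hint_gw (fun x => Real.log (τ x)) G hlogm hlogG k
    -- inner integral computation and sign, for x ∈ Ω
    have hinner : ∀ x ∈ Ω,
        u x * I k - v x * L k - z x * J k + w x * K k ≤ 0 := by
      intro x hx
      have hIw : I k = ∫ y in Ω, w y := rfl
      have hLz : L k = ∫ y in Ω, z y := rfl
      have hJv : J k = ∫ y in Ω, v y := rfl
      have hKu : K k = ∫ y in Ω, u y := rfl
      have i1 : Integrable (fun y => u x * w y) (volume.restrict Ω) :=
        hintw.const_mul _
      have i2 : Integrable (fun y => v x * z y) (volume.restrict Ω) :=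
        hintz.const_mul _
      have i3 : Integrable (fun y => z x * v y) (volume.restrict Ω) :=
        hintv.const_mul _
      have i4 : Integrable (fun y => w x * u y) (volume.restrict Ω) :=
        hintu.const_mul _
      have i12 : Integrable (fun y => u x * w y - v x * z y) (volume.restrict Ω) :=
        i1.sub i2
      have i123 : Integrable (fun y => u x * w y - v x * z y - z x * v y)
          (volume.restrict Ω) := i12.sub i3
      have hcomb : u x * I k - v x * L k - z x * J k + w x * K k
          = ∫ y in Ω, (u x * w y - v x * z y - z x * v y + w x * u y) := by
        rw [hIw, hLz, hJv, hKu]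
        rw [integral_add i123 i4, integral_sub i12 i3, integral_sub i1 i2,
            integral_const_mul, integral_const_mul, integral_const_mul,
            integral_const_mul]
      rw [hcomb]
      apply setIntegral_nonpos hΩm
      intro y hy
      have hWeq : u x * w y - v x * z y - z x * v y + w x * u y
          = ((f x - f y) * (Real.log (τ x) - Real.log (τ y))) * (τ x ^ k * τ y ^ k) := by
        simp only [u, v, w, z]; ring
      rw [hWeq]
      apply mul_nonpos_of_nonpos_of_nonneg
      · rcases lt_trichotomy (f x) (f y) with hlt | heq | hgt
        · have hτlt : τ y < τ x := by rw [hτ, hτ]; exact hρ hlt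
          have hloglt : Real.log (τ y) < Real.log (τ x) :=
            Real.log_lt_log (hτpos y hy) hτlt
          nlinarith
        · simp [heq]
        · have hτlt : τ x < τ y := by rw [hτ, hτ]; exact hρ hgt
          have hloglt : Real.log (τ x) < Real.log (τ y) :=
            Real.log_lt_log (hτpos x hx) hτlt
          nlinarith
      · exact mul_nonneg (hrpow_nonneg k x hx) (hrpow_nonneg k y hy)
    -- outer integral
    have houter : ∫ x in Ω,
        (u x * I k - v x * L k - z x * J k + w x * K k) ≤ 0 :=
      setIntegral_nonpos hΩm hinner
    have j1 : Integrable (fun x => u x * I k) (volume.restrict Ω) :=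
      hintu.mul_const _
    have j2 : Integrable (fun x => v x * L k) (volume.restrict Ω) :=
      hintv.mul_const _
    have j3 : Integrable (fun x => z x * J k) (volume.restrict Ω) :=
      hintz.mul_const _
    have j4 : Integrable (fun x => w x * K k) (volume.restrict Ω) :=
      hintw.mul_const _
    have j12 : Integrable (fun x => u x * I k - v x * L k) (volume.restrict Ω) :=
      j1.sub j2
    have j123 : Integrable (fun x => u x * I k - v x * L k - z x * J k)
        (volume.restrict Ω) := j12.sub j3
    have hexpand : ∫ x in Ω,
        (u x * I k - v x * L k - z x * J k + w x * K k)
        = 2 * (K k * I k - J k * L k) := by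
      rw [integral_add j123 j4, integral_sub j12 j3, integral_sub j1 j2,
          integral_mul_const, integral_mul_const, integral_mul_const,
          integral_mul_const]
      have h1 : (∫ x in Ω, u x) = K k := rfl
      have h2 : (∫ x in Ω, v x) = J k := rfl
      have h3 : (∫ x in Ω, w x) = I k := rfl
      have h4 : (∫ x in Ω, z x) = L k := rfl
      rw [h1, h2, h3, h4]; ring
    rw [hexpand] at houter
    linarith
  -- value of the derivative expression
  have hDval : ∀ k : ℝ, E k (fun x => f x * Real.log (τ x)) -
      E k f * E k (fun x => Real.log (τ x))
      = (K k * I k - J k * L k) / I k ^ 2 := by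
    intro k
    have hne : I k ≠ 0 := (hIpos k).ne'
    rw [hEeq, hEeq, hEeq]
    show K k / I k - J k / I k * (L k / I k) = (K k * I k - J k * L k) / I k ^ 2
    field_simp
  have hderiv : ∀ k : ℝ, HasDerivAt (fun κ : ℝ => E κ f)
      (E k (fun x => f x * Real.log (τ x)) -
        E k f * E k (fun x => Real.log (τ x))) k := by
    intro k
    have hne : I k ≠ 0 := (hIpos k).ne'
    rw [hEf, hDval k]
    exact (hdJ k).div (hdI k) hne
  have hDnonpos : ∀ k : ℝ, E k (fun x => f x * Real.log (τ x)) -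
      E k f * E k (fun x => Real.log (τ x)) ≤ 0 := by
    intro k
    rw [hDval k]
    apply div_nonpos_of_nonpos_of_nonneg (hcov k)
    positivity
  refine ⟨?_, fun k => ⟨hderiv k, hDnonpos k⟩⟩
  apply antitone_of_deriv_nonpos
  · exact fun k => (hderiv k).differentiableAt
  · intro k
    rw [(hderiv k).deriv]
    exact hDnonpos k
end

section
/- The map k ↦ E^(k)(τ) = ∫_Ω τ(x) m^(k)(x) dx is non-decreasing in k. -/
/-!
For Lebesgue measure restricted to `Ω`, the moment `∫ τ ^ k` is the moment generating
function `M(k)` of `log τ`, and `E^(k)(τ) = M(k + 1) / M(k) = exp (log M (k + 1) - log M k)`.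
Hölder's inequality makes the cumulant generating function `log M` convex, so its increments
over steps of length one increase with `k`. Compactness of `Ω`, continuity of `f` and
monotonicity of `ρ` keep `τ` between two positive constants, so `M` is finite everywhere.
-/

open MeasureTheory ProbabilityTheory Real Set

section Holder

variable {α : Type*} {mα : MeasurableSpace α} {μ : Measure α}

lemma memLp_rpow_of_integrable {g : α → ℝ} (hg : Integrable g μ) (hg₀ : 0 ≤ᵐ[μ] g)
    {a : ℝ} (ha : 0 < a) : MemLp (fun x ↦ g x ^ a) (ENNReal.ofReal a⁻¹) μ := by
  have hmeas : AEStronglyMeasurable (fun x ↦ g x ^ a) μ :=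
    (hg.aemeasurable.pow_const a).aestronglyMeasurable
  refine (integrable_norm_rpow_iff hmeas (by simpa using ha) ENNReal.ofReal_ne_top).mp ?_
  refine hg.congr ?_
  filter_upwards [hg₀] with x hx
  rw [ENNReal.toReal_ofReal (inv_nonneg.mpr ha.le), norm_of_nonneg (rpow_nonneg hx a),
    rpow_rpow_inv hx ha.ne']

lemma integral_rpow_mul_rpow_le {g h : α → ℝ} (hg : Integrable g μ) (hh : Integrable h μ)
    (hg₀ : 0 ≤ᵐ[μ] g) (hh₀ : 0 ≤ᵐ[μ] h) {a b : ℝ} (ha : 0 < a) (hb : 0 < b)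
    (hab : a + b = 1) :
    ∫ x, g x ^ a * h x ^ b ∂μ ≤ (∫ x, g x ∂μ) ^ a * (∫ x, h x ∂μ) ^ b := by
  have holder := integral_mul_le_Lp_mul_Lq_of_nonneg (Real.HolderConjugate.inv_inv ha hb hab)
    (by filter_upwards [hg₀] with x hx using rpow_nonneg hx a)
    (by filter_upwards [hh₀] with x hx using rpow_nonneg hx b)
    (memLp_rpow_of_integrable hg hg₀ ha) (memLp_rpow_of_integrable hh hh₀ hb)
  have cancel : ∀ {f : α → ℝ} {c : ℝ}, 0 ≤ᵐ[μ] f → c ≠ 0 →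
      ∫ x, (f x ^ c) ^ c⁻¹ ∂μ = ∫ x, f x ∂μ := fun hf₀ hc ↦
    integral_congr_ae (by filter_upwards [hf₀] with x hx using rpow_rpow_inv hx hc)
  rwa [cancel hg₀ ha.ne', cancel hh₀ hb.ne', one_div, one_div, inv_inv, inv_inv] at holder

end Holder

lemma ConvexOn.monotone_add_const_sub {φ : ℝ → ℝ} (hφ : ConvexOn ℝ univ φ) {h : ℝ}
    (hh : 0 ≤ h) : Monotone fun x ↦ φ (x + h) - φ x := by
  intro x y hxy
  rcases hh.eq_or_lt with rfl | hh
  · simp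
  have hxyh : x < y + h := by linarith
  have slope_le : (φ (x + h) - φ x) / (x + h - x) ≤ (φ (y + h) - φ y) / (y + h - y) :=
    calc (φ (x + h) - φ x) / (x + h - x)
        ≤ (φ (y + h) - φ x) / (y + h - x) :=
          hφ.secant_mono trivial trivial trivial (by linarith) hxyh.ne' (by linarith)
      _ = (φ x - φ (y + h)) / (x - (y + h)) := by rw [← neg_div_neg_eq, neg_sub, neg_sub]
      _ ≤ (φ y - φ (y + h)) / (y - (y + h)) :=
          hφ.secant_mono trivial trivial trivial hxyh.ne (by linarith) hxy
      _ = (φ (y + h) - φ y) / (y + h - y) := by rw [← neg_div_neg_eq, neg_sub, neg_sub]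
  simpa only [add_sub_cancel_left, div_le_div_iff_of_pos_right hh] using slope_le

namespace ProbabilityTheory

variable {Ω : Type*} {mΩ : MeasurableSpace Ω} {μ : Measure Ω} {X : Ω → ℝ}

lemma mgf_add_le_rpow_mul_rpow {s t a b : ℝ} (hs : s ∈ integrableExpSet X μ)
    (ht : t ∈ integrableExpSet X μ) (ha : 0 < a) (hb : 0 < b) (hab : a + b = 1) :
    mgf X μ (a * s + b * t) ≤ mgf X μ s ^ a * mgf X μ t ^ b := by
  have hexp (ω : Ω) :
      exp ((a * s + b * t) * X ω) = exp (s * X ω) ^ a * exp (t * X ω) ^ b := by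
    rw [← exp_mul, ← exp_mul, ← exp_add]
    ring_nf
  simp only [mgf, hexp]
  exact integral_rpow_mul_rpow_le hs ht (ae_of_all _ fun _ ↦ (exp_pos _).le)
    (ae_of_all _ fun _ ↦ (exp_pos _).le) ha hb hab

lemma convexOn_cgf [NeZero μ] : ConvexOn ℝ (integrableExpSet X μ) (cgf X μ) := by
  refine convexOn_iff_forall_pos.mpr
    ⟨convex_integrableExpSet, fun s hs t ht a b ha hb hab ↦ ?_⟩
  have hmem : a • s + b • t ∈ integrableExpSet X μ :=
    convex_integrableExpSet hs ht ha.le hb.le hab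
  have hs₀ := mgf_pos' (NeZero.ne μ) hs
  have ht₀ := mgf_pos' (NeZero.ne μ) ht
  calc cgf X μ (a • s + b • t)
      ≤ log (mgf X μ s ^ a * mgf X μ t ^ b) :=
        log_le_log (mgf_pos' (NeZero.ne μ) hmem) (mgf_add_le_rpow_mul_rpow hs ht ha hb hab)
    _ = a • cgf X μ s + b • cgf X μ t := by
        rw [log_mul (rpow_pos_of_pos hs₀ a).ne' (rpow_pos_of_pos ht₀ b).ne', log_rpow hs₀,
          log_rpow ht₀]
        rfl

lemma monotone_mgf_add_const_div_mgf [NeZero μ]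
    (hX : ∀ t, Integrable (fun ω ↦ exp (t * X ω)) μ) {h : ℝ} (hh : 0 ≤ h) :
    Monotone fun t ↦ mgf X μ (t + h) / mgf X μ t := by
  have hcgf : ConvexOn ℝ univ (cgf X μ) :=
    eq_univ_of_forall (s := integrableExpSet X μ) hX ▸ convexOn_cgf
  have hratio (t : ℝ) :
      mgf X μ (t + h) / mgf X μ t = exp (cgf X μ (t + h) - cgf X μ t) := by
    rw [exp_sub, exp_cgf (hX _), exp_cgf (hX _)]
  simp only [hratio]
  exact exp_monotone.comp (hcgf.monotone_add_const_sub hh)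

lemma integral_rpow_eq_mgf_log {g : Ω → ℝ} (hg : ∀ᵐ ω ∂μ, 0 < g ω) (r : ℝ) :
    ∫ ω, g ω ^ r ∂μ = mgf (fun ω ↦ log (g ω)) μ r :=
  integral_congr_ae <| by
    filter_upwards [hg] with ω hω using by rw [rpow_def_of_pos hω, mul_comm]

end ProbabilityTheory

lemma IsCompact.exists_forall_comp_mem_Icc {α : Type*} [TopologicalSpace α] {K : Set α}
    (hK : IsCompact K) (hne : K.Nonempty) {f : α → ℝ} (hf : ContinuousOn f K)
    {ρ : ℝ → ℝ} (hρ : Antitone ρ) :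
    ∃ x₁ ∈ K, ∃ x₂ ∈ K, ∀ x ∈ K, ρ (f x) ∈ Icc (ρ (f x₁)) (ρ (f x₂)) := by
  obtain ⟨x₁, hx₁, hmax⟩ := hK.exists_isMaxOn hne hf
  obtain ⟨x₂, hx₂, hmin⟩ := hK.exists_isMinOn hne hf
  exact ⟨x₁, hx₁, x₂, hx₂, fun x hx ↦ ⟨hρ (hmax hx), hρ (hmin hx)⟩⟩

/-- k ↦ E^(k)(τ) = ∫_Ω τ(x) m^(k)(x) dx is non-decreasing. -/
theorem stmt14 {n : ℕ} (Ω : Set (EuclideanSpace ℝ (Fin n)))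
    (hΩc : IsCompact Ω) (hΩpos : 0 < volume Ω)
    (f : EuclideanSpace ℝ (Fin n) → ℝ) (hf : ContinuousOn f Ω)
    (ρ : ℝ → ℝ) (hρ : StrictAnti ρ) (hρpos : ∀ x ∈ Ω, 0 < ρ (f x))
    (τ : EuclideanSpace ℝ (Fin n) → ℝ) (hτ : ∀ x, τ x = ρ (f x))
    (m : ℝ → EuclideanSpace ℝ (Fin n) → ℝ)
    (hm : ∀ k x, m k x = τ x ^ k / ∫ t in Ω, τ t ^ k) :
    Monotone (fun k : ℝ => ∫ x in Ω, τ x * m k x) := by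
  set μ := volume.restrict Ω
  have hΩ : ∀ᵐ x ∂μ, x ∈ Ω := ae_restrict_mem hΩc.measurableSet
  have : IsFiniteMeasure μ := isFiniteMeasure_restrict.mpr hΩc.measure_lt_top.ne
  have : NeZero μ := ⟨by simpa [μ, Measure.restrict_eq_zero] using hΩpos.ne'⟩
  obtain ⟨x₁, hx₁, x₂, -, hbound⟩ := hΩc.exists_forall_comp_mem_Icc
    (nonempty_of_measure_ne_zero hΩpos.ne') hf hρ.antitone
  have hτpos : ∀ᵐ x ∂μ, 0 < τ x := by
    filter_upwards [hΩ] with x hx using hτ x ▸ hρpos x hx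
  have hτm : AEMeasurable τ μ := by
    rw [show τ = ρ ∘ f from funext hτ]
    exact hρ.antitone.measurable.comp_aemeasurable (hf.aemeasurable hΩc.measurableSet)
  have hexp (t : ℝ) : Integrable (fun x ↦ exp (t * log (τ x))) μ := by
    refine integrable_exp_mul_of_mem_Icc hτm.log
      (a := log (ρ (f x₁))) (b := log (ρ (f x₂))) ?_
    filter_upwards [hΩ] with x hx
    obtain ⟨hlo, hhi⟩ := hτ x ▸ hbound x hx
    have hc := hρpos x₁ hx₁
    exact ⟨log_le_log hc hlo, log_le_log (hc.trans_le hlo) hhi⟩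
  have hE (k : ℝ) : ∫ x, τ x * m k x ∂μ
      = mgf (fun x ↦ log (τ x)) μ (k + 1) / mgf (fun x ↦ log (τ x)) μ k := by
    simp only [hm, mul_div_assoc', integral_div, ← integral_rpow_eq_mgf_log hτpos]
    congr 1
    refine integral_congr_ae ?_
    filter_upwards [hτpos] with x hx
    rw [rpow_add_one hx.ne', mul_comm]
  simpa only [hE] using monotone_mgf_add_const_div_mgf hexp zero_le_one
end

section
/- Define D_τ^(k) = {x ∈ Ω : τ(x) ≥ E^(k)(τ)}. Then Ω ⊇ D_τ^(k) ⊇ D_τ^(k+Δk) ⊇ X* for all k ∈ ℝ and Δk > 0. -/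
/-! `E k` is the ratio `g (k + 1) / g k` of the moment function `g s = ∫_Ω τ ^ s`, which is
log-convex by Hölder's inequality; so `E` is nondecreasing in `k` and the sets `D k` shrink as `k`
grows. Being the mean of `τ` against the density `m k`, `E k` never exceeds `max τ`, which `τ`
attains at every minimiser of `f` because `ρ` is decreasing; hence `X* ⊆ D k` for all `k`. -/

open MeasureTheory Real

namespace MeasureTheory

variable {α : Type*} [MeasurableSpace α] {μ : Measure α} {τ : α → ℝ}

noncomputable def momentRatio (μ : Measure α) (τ : α → ℝ) (s : ℝ) : ℝ :=
  (∫ x, τ x ^ (s + 1) ∂μ) / ∫ x, τ x ^ s ∂μ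

lemma integral_mul_rpow_div_integral_rpow (hτ : ∀ᵐ x ∂μ, 0 < τ x) (s : ℝ) :
    ∫ x, τ x * (τ x ^ s / ∫ t, τ t ^ s ∂μ) ∂μ = momentRatio μ τ s := by
  rw [momentRatio, ← integral_div]
  refine integral_congr_ae ?_
  filter_upwards [hτ] with x hx
  rw [rpow_add_one hx.ne', mul_div_assoc', mul_comm]

lemma integrable_rpow_of_ae_mem_Icc [IsFiniteMeasure μ] (hτm : AEMeasurable τ μ) {a b : ℝ}
    (hb : 0 < b) (hτ : ∀ᵐ x ∂μ, τ x ∈ Set.Icc b a) (s : ℝ) :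
    Integrable (fun x ↦ τ x ^ s) μ := by
  refine .of_bound (hτm.pow_const s).aestronglyMeasurable (max (a ^ s) (b ^ s)) ?_
  filter_upwards [hτ] with x ⟨hbx, hxa⟩
  have hx : 0 < τ x := hb.trans_le hbx
  rw [norm_of_nonneg (rpow_nonneg hx.le s)]
  rcases le_or_gt 0 s with hs | hs
  · exact le_max_of_le_left (rpow_le_rpow hx.le hxa hs)
  · exact le_max_of_le_right (rpow_le_rpow_of_nonpos hb hbx hs.le)

lemma integral_rpow_pos [NeZero μ] (hτ : ∀ᵐ x ∂μ, 0 < τ x) {s : ℝ}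
    (hs : Integrable (fun x ↦ τ x ^ s) μ) : 0 < ∫ x, τ x ^ s ∂μ := by
  have hpos : ∀ᵐ x ∂μ, 0 < τ x ^ s := hτ.mono fun x hx ↦ rpow_pos_of_pos hx s
  have hsupp : Function.support (fun x ↦ τ x ^ s) =ᵐ[μ] Set.univ :=
    Filter.eventuallyEq_univ.mpr (hpos.mono fun x hx ↦ hx.ne')
  rw [integral_pos_iff_support_of_nonneg_ae (hpos.mono fun x hx ↦ hx.le) hs, measure_congr hsupp]
  exact Measure.measure_univ_pos.mpr (NeZero.ne μ)

lemma memLp_rpow_div (hτ : ∀ᵐ x ∂μ, 0 < τ x) {a p : ℝ} (hp : 0 < p)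
    (ha : Integrable (fun x ↦ τ x ^ a) μ) :
    MemLp (fun x ↦ τ x ^ (a / p)) (ENNReal.ofReal p) μ := by
  have hpow : ∀ᵐ x ∂μ, (τ x ^ a) ^ p⁻¹ = τ x ^ (a / p) :=
    hτ.mono fun x hx ↦ by rw [← rpow_mul hx.le, div_eq_mul_inv]
  have hmeas : AEStronglyMeasurable (fun x ↦ τ x ^ (a / p)) μ :=
    ((ha.aemeasurable.pow_const p⁻¹).congr hpow).aestronglyMeasurable
  rw [← integrable_norm_rpow_iff hmeas (by simpa using hp) ENNReal.ofReal_ne_top,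
    ENNReal.toReal_ofReal hp.le]
  refine ha.congr ?_
  filter_upwards [hτ] with x hx
  rw [norm_of_nonneg (rpow_nonneg hx.le _), ← rpow_mul hx.le, div_mul_cancel₀ _ hp.ne']

lemma integral_rpow_convex_comb_le (hτ : ∀ᵐ x ∂μ, 0 < τ x) {θ : ℝ} (hθ₀ : 0 < θ) (hθ₁ : θ < 1)
    {a b : ℝ} (ha : Integrable (fun x ↦ τ x ^ a) μ) (hb : Integrable (fun x ↦ τ x ^ b) μ) :
    ∫ x, τ x ^ ((1 - θ) * a + θ * b) ∂μ ≤
      (∫ x, τ x ^ a ∂μ) ^ (1 - θ) * (∫ x, τ x ^ b ∂μ) ^ θ := by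
  set p := (1 - θ)⁻¹
  set q := θ⁻¹
  have hp : 0 < p := inv_pos.mpr (sub_pos.mpr hθ₁)
  have hq : 0 < q := inv_pos.mpr hθ₀
  have hpq : p.HolderConjugate q := by
    rw [holderConjugate_iff]
    refine ⟨one_lt_inv₀ (sub_pos.mpr hθ₁) |>.mpr (by linarith), ?_⟩
    simp only [p, q, inv_inv]
    ring
  have hpow : ∀ {c r : ℝ}, 0 < r → ∫ x, (τ x ^ (c / r)) ^ r ∂μ = ∫ x, τ x ^ c ∂μ := fun hr ↦
    integral_congr_ae <| by
      filter_upwards [hτ] with x hx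
      rw [← rpow_mul hx.le, div_mul_cancel₀ _ hr.ne']
  have hnonneg : ∀ c : ℝ, 0 ≤ᵐ[μ] fun x ↦ τ x ^ c := fun c ↦
    hτ.mono fun x hx ↦ rpow_nonneg hx.le c
  calc ∫ x, τ x ^ ((1 - θ) * a + θ * b) ∂μ
      = ∫ x, τ x ^ (a / p) * τ x ^ (b / q) ∂μ :=
        integral_congr_ae <| by
          filter_upwards [hτ] with x hx
          rw [← rpow_add hx]
          simp only [p, q, div_inv_eq_mul, mul_comm]
    _ ≤ (∫ x, (τ x ^ (a / p)) ^ p ∂μ) ^ (1 / p) * (∫ x, (τ x ^ (b / q)) ^ q ∂μ) ^ (1 / q) :=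
        integral_mul_le_Lp_mul_Lq_of_nonneg hpq (hnonneg _) (hnonneg _)
          (memLp_rpow_div hτ hp ha) (memLp_rpow_div hτ hq hb)
    _ = (∫ x, τ x ^ a ∂μ) ^ (1 - θ) * (∫ x, τ x ^ b ∂μ) ^ θ := by
        rw [hpow hp, hpow hq]
        simp only [p, q, one_div, inv_inv]

/-- Log-convexity of `s ↦ ∫ τ ^ s ∂μ`, applied with `θ = 1 / (Δ + 1)`, which writes `k + 1` and
`k + Δ` as the two convex combinations `(1 - θ) k + θ K` and `θ k + (1 - θ) K` of `k` and
`K = k + Δ + 1`. -/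
lemma integral_rpow_mul_integral_rpow_le (hτ : ∀ᵐ x ∂μ, 0 < τ x)
    (hint : ∀ s : ℝ, Integrable (fun x ↦ τ x ^ s) μ) (k : ℝ) {Δ : ℝ} (hΔ : 0 < Δ) :
    (∫ x, τ x ^ (k + 1) ∂μ) * ∫ x, τ x ^ (k + Δ) ∂μ ≤
      (∫ x, τ x ^ k ∂μ) * ∫ x, τ x ^ (k + Δ + 1) ∂μ := by
  set θ := (Δ + 1)⁻¹
  have hθ₀ : 0 < θ := by positivity
  have hθ₁ : θ < 1 := inv_lt_one_of_one_lt₀ (by linarith)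
  have hk1 : (1 - θ) * k + θ * (k + Δ + 1) = k + 1 := by
    simp only [θ]; field_simp; ring
  have hkΔ : (1 - (1 - θ)) * k + (1 - θ) * (k + Δ + 1) = k + Δ := by
    simp only [θ]; field_simp; ring
  have h₁ := integral_rpow_convex_comb_le hτ hθ₀ hθ₁ (hint k) (hint (k + Δ + 1))
  have h₂ := integral_rpow_convex_comb_le hτ (sub_pos.mpr hθ₁) (by linarith) (hint k)
    (hint (k + Δ + 1))
  rw [hk1] at h₁
  rw [hkΔ] at h₂
  have hg : ∀ s : ℝ, 0 ≤ ∫ x, τ x ^ s ∂μ := fun s ↦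
    integral_nonneg_of_ae <| hτ.mono fun x hx ↦ rpow_nonneg hx.le s
  set G := ∫ x, τ x ^ k ∂μ
  set H := ∫ x, τ x ^ (k + Δ + 1) ∂μ
  have hsplit : ∀ {c : ℝ}, 0 ≤ c → c ^ (1 - θ) * c ^ θ = c := fun hc ↦ by
    rw [← rpow_add' hc (by simp), sub_add_cancel, rpow_one]
  calc (∫ x, τ x ^ (k + 1) ∂μ) * ∫ x, τ x ^ (k + Δ) ∂μ
      ≤ (G ^ (1 - θ) * H ^ θ) * (G ^ (1 - (1 - θ)) * H ^ (1 - θ)) :=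
        mul_le_mul h₁ h₂ (hg _) (mul_nonneg (rpow_nonneg (hg _) _) (rpow_nonneg (hg _) _))
    _ = (G ^ (1 - θ) * G ^ θ) * (H ^ (1 - θ) * H ^ θ) := by rw [sub_sub_cancel]; ring
    _ = G * H := by rw [hsplit (hg k), hsplit (hg _)]

lemma monotone_momentRatio [NeZero μ] (hτ : ∀ᵐ x ∂μ, 0 < τ x)
    (hint : ∀ s : ℝ, Integrable (fun x ↦ τ x ^ s) μ) : Monotone (momentRatio μ τ) := by
  intro k k' hkk'
  obtain ⟨Δ, hΔ, rfl⟩ : ∃ Δ, 0 ≤ Δ ∧ k' = k + Δ := ⟨k' - k, sub_nonneg.mpr hkk', by ring⟩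
  rcases hΔ.eq_or_lt with rfl | hΔ
  · rw [add_zero]
  rw [momentRatio, momentRatio, div_le_div_iff₀ (integral_rpow_pos hτ (hint _))
    (integral_rpow_pos hτ (hint _))]
  exact (integral_rpow_mul_integral_rpow_le hτ hint k hΔ).trans_eq (mul_comm _ _)

lemma momentRatio_le [NeZero μ] (hτ : ∀ᵐ x ∂μ, 0 < τ x)
    (hint : ∀ s : ℝ, Integrable (fun x ↦ τ x ^ s) μ) {c : ℝ} (hc : ∀ᵐ x ∂μ, τ x ≤ c) (s : ℝ) :
    momentRatio μ τ s ≤ c := by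
  rw [momentRatio, div_le_iff₀ (integral_rpow_pos hτ (hint s)), ← integral_const_mul]
  refine integral_mono_ae (hint _) ((hint s).const_mul c) ?_
  filter_upwards [hτ, hc] with x hx hxc
  rw [rpow_add_one hx.ne', mul_comm]
  exact mul_le_mul_of_nonneg_right hxc (rpow_nonneg hx.le s)

end MeasureTheory

/-- With D_τ^(k) = {x ∈ Ω : τ(x) ≥ E^(k)(τ)}, for all k and
Δk > 0: Ω ⊇ D_τ^(k) ⊇ D_τ^(k+Δk) ⊇ X*. -/
theorem stmt15 {n : ℕ} (Ω : Set (EuclideanSpace ℝ (Fin n)))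
    (hΩc : IsCompact Ω) (hΩpos : 0 < volume Ω)
    (f : EuclideanSpace ℝ (Fin n) → ℝ) (hf : ContinuousOn f Ω)
    (ρ : ℝ → ℝ) (hρ : StrictAnti ρ) (hρpos : ∀ x ∈ Ω, 0 < ρ (f x))
    (τ : EuclideanSpace ℝ (Fin n) → ℝ) (hτ : ∀ x, τ x = ρ (f x))
    (m : ℝ → EuclideanSpace ℝ (Fin n) → ℝ)
    (hm : ∀ k x, m k x = τ x ^ k / ∫ t in Ω, τ t ^ k)
    (E : ℝ → ℝ) (hE : ∀ k, E k = ∫ x in Ω, τ x * m k x)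
    (Xstar : Set (EuclideanSpace ℝ (Fin n)))
    (hX : Xstar = {x ∈ Ω | ∀ y ∈ Ω, f x ≤ f y})
    (D : ℝ → Set (EuclideanSpace ℝ (Fin n)))
    (hD : ∀ k, D k = {x ∈ Ω | E k ≤ τ x}) :
    ∀ k : ℝ, ∀ Δk : ℝ, 0 < Δk →
      D k ⊆ Ω ∧ D (k + Δk) ⊆ D k ∧ Xstar ⊆ D (k + Δk) := by
  intro k Δk hΔk
  have hΩm : MeasurableSet Ω := hΩc.measurableSet
  have : IsFiniteMeasure (volume.restrict Ω) := isFiniteMeasure_restrict.mpr hΩc.measure_lt_top.ne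
  have : NeZero (volume.restrict Ω) := ⟨by simpa [Measure.restrict_eq_zero] using hΩpos.ne'⟩
  have hτ_le : ∀ {x y}, f x ≤ f y → τ y ≤ τ x := fun hxy ↦ by
    rw [hτ, hτ]; exact hρ.antitone hxy
  obtain ⟨z, hzΩ, hz⟩ := hΩc.exists_isMinOn (nonempty_of_measure_ne_zero hΩpos.ne') hf
  obtain ⟨w, hwΩ, hw⟩ := hΩc.exists_isMaxOn (nonempty_of_measure_ne_zero hΩpos.ne') hf
  have hτ_pos : ∀ᵐ x ∂volume.restrict Ω, 0 < τ x :=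
    ae_restrict_of_forall_mem hΩm fun x hx ↦ hτ x ▸ hρpos x hx
  have hτ_meas : AEMeasurable τ (volume.restrict Ω) := by
    rw [show τ = ρ ∘ f from funext hτ]
    exact hρ.antitone.measurable.comp_aemeasurable (hf.aemeasurable hΩm)
  have hint := integrable_rpow_of_ae_mem_Icc hτ_meas (hτ w ▸ hρpos w hwΩ)
    (ae_restrict_of_forall_mem hΩm fun x hx ↦ ⟨hτ_le (hw hx), hτ_le (hz hx)⟩)
  have hE_eq : E = momentRatio (volume.restrict Ω) τ := funext fun s ↦ by
    simp only [hE, hm, integral_mul_rpow_div_integral_rpow hτ_pos]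
  have hE_mono := monotone_momentRatio hτ_pos hint (le_add_of_nonneg_right (a := k) hΔk.le)
  subst hX
  simp only [hD, hE_eq]
  refine ⟨Set.sep_subset _ _, fun x hx ↦ ⟨hx.1, hE_mono.trans hx.2⟩, fun x hx ↦ ⟨hx.1, ?_⟩⟩
  exact momentRatio_le hτ_pos hint (ae_restrict_of_forall_mem hΩm fun y hy ↦ hτ_le (hx.2 y hy)) _
end
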